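/- Under the stratified randomized survey experiment, for every stratum k and arm t∈{0,1}, the within-stratum sample variance of observed outcomes is unbiased: E[s²_{[k]t}] = S²_{[k]t}. Consequently, using Π_{[k]}²π_{[k]}^{-1}f_{[k]} = Π_{[k]}f, the expectation of the variance estimator satisfies exactly E[V̂_{ττ}] − V_{ττ} = f·Σ_{k=1}^K Π_{[k]} S²_{[k]τ} ≥ 0, so V̂_{ττ} is conservative in expectation, with equality if and only if S²_{[k]τ}=0 for every k. -/

import Mathlib

open MeasureTheory ProbabilityTheory Filter Matrix
open scoped ENNReal NNReal

noncomputable section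

namespace SurveyExperiments

/-- The uniform probability measure on a finite set of outcomes. -/
def unif {α : Type*} [MeasurableSpace α] (s : Finset α) : Measure α :=
  (s.card : ℝ≥0∞)⁻¹ • ∑ a ∈ s, MeasureTheory.Measure.dirac a

/-- The covariance of two real-valued random variables. -/
def covRV {Ω : Type*} [MeasurableSpace Ω] (μ : Measure Ω) (f g : Ω → ℝ) : ℝ :=
  ∫ ω, (f ω - ∫ x, f x ∂μ) * (g ω - ∫ x, g x ∂μ) ∂μ

/-- The total variation distance between two measures. -/
def dTV {α : Type*} [MeasurableSpace α] (P Q : Measure α) : ℝ :=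
  ⨆ A : Set α, |(P A).toReal - (Q A).toReal|

/-- The standard Gaussian measure on `ℝ^J`. -/
def stdGaussianPi (J : ℕ) : Measure (Fin J → ℝ) := Measure.pi fun _ => gaussianReal 0 1

/-- The law `L_{J,a}` of the first coordinate of a standard Gaussian vector in `ℝ^J`
conditioned on the event that its squared norm is at most `a`. -/
def truncGaussian (J : ℕ) [NeZero J] (a : ℝ) : Measure ℝ :=
  Measure.map (fun x => x 0)
    (ProbabilityTheory.cond (stdGaussianPi J) {x | ∑ i, (x i) ^ 2 ≤ a})

/-- `ν_{J,a}`, the variance of the truncated Gaussian `L_{J,a}`. -/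
def nu (J : ℕ) [NeZero J] (a : ℝ) : ℝ := variance id (truncGaussian J a)

/-- The law of `√v (√(1-rW-rX) ε + √rW L_{J1,aS} + √rX L_{J2,aT})` with independent
`ε ~ N(0,1)`, `L_{J1,aS}`, `L_{J2,aT}`. -/
def rrLimitLaw (v rW rX : ℝ) (J1 J2 : ℕ) [NeZero J1] [NeZero J2] (aS aT : ℝ) : Measure ℝ :=
  Measure.map
    (fun p : ℝ × ℝ × ℝ =>
      Real.sqrt v * (Real.sqrt (1 - rW - rX) * p.1 + Real.sqrt rW * p.2.1 + Real.sqrt rX * p.2.2))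
    ((gaussianReal 0 1).prod ((truncGaussian J1 aS).prod (truncGaussian J2 aT)))

/-- The `p`-th quantile of a measure on `ℝ`. -/
def quantile (μ : Measure ℝ) (p : ℝ) : ℝ := sInf {x : ℝ | ENNReal.ofReal p ≤ μ (Set.Iic x)}

/-- The data of a stratified (randomized survey) experiment: a population of `N` units
partitioned into `K` strata by `st`, with `nk k` units sampled and `nk1 k` sampled units
treated in stratum `k`. -/
structure SRSE where
  K : ℕ
  N : ℕ
  st : Fin N → Fin K
  nk : Fin K → ℕ
  nk1 : Fin K → ℕ

namespace SRSE

variable (E : SRSE)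

def stratum (k : Fin E.K) : Finset (Fin E.N) := Finset.univ.filter fun i => E.st i = k
def Nk (k : Fin E.K) : ℕ := (E.stratum k).card
def nk0 (k : Fin E.K) : ℕ := E.nk k - E.nk1 k
def n : ℕ := ∑ k, E.nk k
def Pi (k : Fin E.K) : ℝ := (E.Nk k : ℝ) / (E.N : ℝ)
def pik (k : Fin E.K) : ℝ := (E.nk k : ℝ) / (E.n : ℝ)
def fk (k : Fin E.K) : ℝ := (E.nk k : ℝ) / (E.Nk k : ℝ)
def f : ℝ := (E.n : ℝ) / (E.N : ℝ)
def e1 (k : Fin E.K) : ℝ := (E.nk1 k : ℝ) / (E.nk k : ℝ)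
def e0 (k : Fin E.K) : ℝ := (E.nk0 k : ℝ) / (E.nk k : ℝ)

/-- Sample space: a pair of sampling indicators and treatment indicators. -/
abbrev Omega := (Fin E.N → Bool) × (Fin E.N → Bool)

/-- The attainable pairs of indicators: `nk k` sampled and `nk1 k` treated units in each
stratum `k`, with treated units sampled. -/
def valid : Finset E.Omega :=
  Finset.univ.filter fun ω =>
    (∀ k, ((E.stratum k).filter fun i => ω.1 i = true).card = E.nk k) ∧
    (∀ k, ((E.stratum k).filter fun i => ω.1 i = true ∧ ω.2 i = true).card = E.nk1 k) ∧
    (∀ i, ω.2 i = true → ω.1 i = true)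

/-- The stratified randomized survey experiment (SRSE) design: stratified random sampling
without replacement followed by stratified randomization, i.e. the uniform distribution over
all attainable pairs of indicator vectors. -/
def P : Measure E.Omega := unif E.valid

def Z (ω : E.Omega) (i : Fin E.N) : ℝ := if ω.1 i then 1 else 0
def T (ω : E.Omega) (i : Fin E.N) : ℝ := if ω.2 i then 1 else 0

def meanK (a : Fin E.N → ℝ) (k : Fin E.K) : ℝ := (∑ i ∈ E.stratum k, a i) / (E.Nk k : ℝ)
def covK (a b : Fin E.N → ℝ) (k : Fin E.K) : ℝ :=
  (∑ i ∈ E.stratum k, (a i - E.meanK a k) * (b i - E.meanK b k)) / ((E.Nk k : ℝ) - 1)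
def meanAll (a : Fin E.N → ℝ) : ℝ := (∑ i, a i) / (E.N : ℝ)
def varAll (a : Fin E.N → ℝ) : ℝ := (∑ i, (a i - E.meanAll a) ^ 2) / ((E.N : ℝ) - 1)

def mean1 (a : Fin E.N → ℝ) (k : Fin E.K) (ω : E.Omega) : ℝ :=
  (∑ i ∈ E.stratum k, E.Z ω i * E.T ω i * a i) / (E.nk1 k : ℝ)
def mean0 (a : Fin E.N → ℝ) (k : Fin E.K) (ω : E.Omega) : ℝ :=
  (∑ i ∈ E.stratum k, E.Z ω i * (1 - E.T ω i) * a i) / (E.nk0 k : ℝ)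
def meanS (a : Fin E.N → ℝ) (k : Fin E.K) (ω : E.Omega) : ℝ :=
  (∑ i ∈ E.stratum k, E.Z ω i * a i) / (E.nk k : ℝ)

/-- The stratified difference-in-means estimator. -/
def hatTau (Y1 Y0 : Fin E.N → ℝ) (ω : E.Omega) : ℝ :=
  ∑ k, E.Pi k * (E.mean1 Y1 k ω - E.mean0 Y0 k ω)
/-- The finite-population average treatment effect. -/
def tau (Y1 Y0 : Fin E.N → ℝ) : ℝ := ∑ k, E.Pi k * (E.meanK Y1 k - E.meanK Y0 k)
/-- The treated/control covariate-mean-difference `τ̂_X`. -/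
def hatTauX {J : ℕ} (X : Fin E.N → Fin J → ℝ) (ω : E.Omega) : Fin J → ℝ := fun j =>
  ∑ k, E.Pi k * (E.mean1 (fun i => X i j) k ω - E.mean0 (fun i => X i j) k ω)
/-- The sampled/population covariate-mean-difference `δ̂_W`. -/
def hatDeltaW {J : ℕ} (W : Fin E.N → Fin J → ℝ) (ω : E.Omega) : Fin J → ℝ := fun j =>
  ∑ k, E.Pi k * (E.meanS (fun i => W i j) k ω - E.meanK (fun i => W i j) k)

def sCov1 (a b : Fin E.N → ℝ) (k : Fin E.K) (ω : E.Omega) : ℝ :=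
  (∑ i ∈ E.stratum k, E.Z ω i * E.T ω i * (a i - E.mean1 a k ω) * (b i - E.mean1 b k ω)) /
    ((E.nk1 k : ℝ) - 1)
def sCov0 (a b : Fin E.N → ℝ) (k : Fin E.K) (ω : E.Omega) : ℝ :=
  (∑ i ∈ E.stratum k, E.Z ω i * (1 - E.T ω i) * (a i - E.mean0 a k ω) * (b i - E.mean0 b k ω)) /
    ((E.nk0 k : ℝ) - 1)
def sCovS (a b : Fin E.N → ℝ) (k : Fin E.K) (ω : E.Omega) : ℝ :=
  (∑ i ∈ E.stratum k, E.Z ω i * (a i - E.meanS a k ω) * (b i - E.meanS b k ω)) /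
    ((E.nk k : ℝ) - 1)

/-- The `(τ,τ)` entry of the covariance matrix `V`. -/
def Vtt (Y1 Y0 : Fin E.N → ℝ) : ℝ :=
  ∑ k, (E.Pi k) ^ 2 / E.pik k *
    (E.covK Y1 Y1 k / E.e1 k + E.covK Y0 Y0 k / E.e0 k -
      E.fk k * E.covK (fun i => Y1 i - Y0 i) (fun i => Y1 i - Y0 i) k)
/-- The `(τ,X)` block of `V`. -/
def VtX {J : ℕ} (Y1 Y0 : Fin E.N → ℝ) (X : Fin E.N → Fin J → ℝ) : Fin J → ℝ := fun j =>
  ∑ k, (E.Pi k) ^ 2 / E.pik k *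
    (E.covK (fun i => X i j) Y1 k / E.e1 k + E.covK (fun i => X i j) Y0 k / E.e0 k)
/-- The `(τ,W)` block of `V`. -/
def VtW {J : ℕ} (Y1 Y0 : Fin E.N → ℝ) (W : Fin E.N → Fin J → ℝ) : Fin J → ℝ := fun j =>
  ∑ k, (E.Pi k) ^ 2 / E.pik k *
    ((1 - E.fk k) * E.covK (fun i => W i j) (fun i => Y1 i - Y0 i) k)
/-- The `(X,X)` block of `V`. -/
def VXX {J : ℕ} (X : Fin E.N → Fin J → ℝ) : Matrix (Fin J) (Fin J) ℝ :=
  Matrix.of fun j j' =>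
    ∑ k, (E.Pi k) ^ 2 / E.pik k *
      (E.covK (fun i => X i j) (fun i => X i j') k / (E.e1 k * E.e0 k))
/-- The `(W,W)` block of `V`. -/
def VWW {J : ℕ} (W : Fin E.N → Fin J → ℝ) : Matrix (Fin J) (Fin J) ℝ :=
  Matrix.of fun j j' =>
    ∑ k, (E.Pi k) ^ 2 / E.pik k *
      ((1 - E.fk k) * E.covK (fun i => W i j) (fun i => W i j') k)

/-- The covariance matrix of `δ̂_W` under stratified random sampling. -/
def covWSampling {J : ℕ} (W : Fin E.N → Fin J → ℝ) : Matrix (Fin J) (Fin J) ℝ :=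
  Matrix.of fun j j' =>
    ∑ k, (E.Pi k) ^ 2 * ((E.nk k : ℝ)⁻¹ - (E.Nk k : ℝ)⁻¹) *
      E.covK (fun i => W i j) (fun i => W i j') k
/-- The Mahalanobis sampling-balance criterion `M_S`. -/
def MS {J : ℕ} (W : Fin E.N → Fin J → ℝ) (ω : E.Omega) : ℝ :=
  E.hatDeltaW W ω ⬝ᵥ ((E.covWSampling W)⁻¹ *ᵥ E.hatDeltaW W ω)
/-- The conditional covariance matrix of `τ̂_X` given the sample. -/
def covXAssign {J : ℕ} (X : Fin E.N → Fin J → ℝ) (ω : E.Omega) : Matrix (Fin J) (Fin J) ℝ :=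
  Matrix.of fun j j' =>
    ∑ k, (E.Pi k) ^ 2 * ((E.nk k : ℝ) / ((E.nk1 k : ℝ) * (E.nk0 k : ℝ))) *
      E.sCovS (fun i => X i j) (fun i => X i j') k ω
/-- The Mahalanobis assignment-balance criterion `M_T`. -/
def MT {J : ℕ} (X : Fin E.N → Fin J → ℝ) (ω : E.Omega) : ℝ :=
  E.hatTauX X ω ⬝ᵥ ((E.covXAssign X ω)⁻¹ *ᵥ E.hatTauX X ω)
/-- The acceptance event `{M_S ≤ a_S, M_T ≤ a_T}`. -/
def accept {J1 J2 : ℕ} (W : Fin E.N → Fin J1 → ℝ) (X : Fin E.N → Fin J2 → ℝ) (aS aT : ℝ) :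
    Set E.Omega := {ω | E.MS W ω ≤ aS ∧ E.MT X ω ≤ aT}

/-- The SRSRR design: the SRSE design conditioned on acceptance of both balance criteria. -/
def Prr {J1 J2 : ℕ} (W : Fin E.N → Fin J1 → ℝ) (X : Fin E.N → Fin J2 → ℝ) (aS aT : ℝ) :
    Measure E.Omega := ProbabilityTheory.cond E.P (E.accept W X aS aT)

/-- The conservative variance estimator `V̂_ττ`. -/
def hatVtt (Y1 Y0 : Fin E.N → ℝ) (ω : E.Omega) : ℝ :=
  ∑ k, (E.Pi k) ^ 2 / E.pik k * (E.sCov1 Y1 Y1 k ω / E.e1 k + E.sCov0 Y0 Y0 k ω / E.e0 k)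
/-- The estimator `V̂_τX`. -/
def hatVtX {J : ℕ} (Y1 Y0 : Fin E.N → ℝ) (X : Fin E.N → Fin J → ℝ) (ω : E.Omega) : Fin J → ℝ :=
  fun j => ∑ k, (E.Pi k) ^ 2 / E.pik k *
    (E.sCov1 (fun i => X i j) Y1 k ω / E.e1 k + E.sCov0 (fun i => X i j) Y0 k ω / E.e0 k)
/-- The estimator `V̂_τW`. -/
def hatVtW {J : ℕ} (Y1 Y0 : Fin E.N → ℝ) (W : Fin E.N → Fin J → ℝ) (ω : E.Omega) : Fin J → ℝ :=
  fun j => ∑ k, (E.Pi k) ^ 2 / E.pik k *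
    ((1 - E.fk k) * (E.sCov1 (fun i => W i j) Y1 k ω - E.sCov0 (fun i => W i j) Y0 k ω))
/-- The estimator `V̂_XX`. -/
def hatVXX {J : ℕ} (X : Fin E.N → Fin J → ℝ) (ω : E.Omega) : Matrix (Fin J) (Fin J) ℝ :=
  Matrix.of fun j j' => ∑ k, (E.Pi k) ^ 2 / E.pik k *
    (E.sCovS (fun i => X i j) (fun i => X i j') k ω / (E.e1 k * E.e0 k))
/-- The plug-in estimator `R̂²_W` (also used for `R̂²_E` with analysis-stage covariates). -/
def hatRW2 {J : ℕ} (Y1 Y0 : Fin E.N → ℝ) (W : Fin E.N → Fin J → ℝ) (ω : E.Omega) : ℝ :=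
  (E.hatVtW Y1 Y0 W ω ⬝ᵥ ((E.VWW W)⁻¹ *ᵥ E.hatVtW Y1 Y0 W ω)) / E.hatVtt Y1 Y0 ω
/-- The plug-in estimator `R̂²_X` (also used for `R̂²_C` with analysis-stage covariates). -/
def hatRX2 {J : ℕ} (Y1 Y0 : Fin E.N → ℝ) (X : Fin E.N → Fin J → ℝ) (ω : E.Omega) : ℝ :=
  (E.hatVtX Y1 Y0 X ω ⬝ᵥ ((E.hatVXX X ω)⁻¹ *ᵥ E.hatVtX Y1 Y0 X ω)) / E.hatVtt Y1 Y0 ω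

/-- The estimated regression-adjustment coefficient `β̂`. -/
def hatBeta {J : ℕ} (Y1 Y0 : Fin E.N → ℝ) (C : Fin E.N → Fin J → ℝ) (ω : E.Omega) : Fin J → ℝ :=
  (E.hatVXX C ω)⁻¹ *ᵥ E.hatVtX Y1 Y0 C ω
/-- The estimated regression-adjustment coefficient `γ̂`. -/
def hatGamma {J : ℕ} (Y1 Y0 : Fin E.N → ℝ) (Ecov : Fin E.N → Fin J → ℝ) (ω : E.Omega) :
    Fin J → ℝ :=
  (E.VWW Ecov)⁻¹ *ᵥ E.hatVtW Y1 Y0 Ecov ω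
/-- The regression-adjusted estimator `τ̂_adj = τ̂ - β̂ᵀτ̂_C - γ̂ᵀδ̂_E`. -/
def hatTauAdj {J3 J4 : ℕ} (Y1 Y0 : Fin E.N → ℝ) (C : Fin E.N → Fin J4 → ℝ)
    (Ecov : Fin E.N → Fin J3 → ℝ) (ω : E.Omega) : ℝ :=
  E.hatTau Y1 Y0 ω - E.hatBeta Y1 Y0 C ω ⬝ᵥ E.hatTauX C ω -
    E.hatGamma Y1 Y0 Ecov ω ⬝ᵥ E.hatDeltaW Ecov ω

/-- The vector stratified difference-in-means estimator `τ̂_R`. -/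
def hatTauVec {d : ℕ} (R1 R0 : Fin E.N → Fin d → ℝ) (ω : E.Omega) : Fin d → ℝ := fun j =>
  ∑ k, E.Pi k * (E.mean1 (fun i => R1 i j) k ω - E.mean0 (fun i => R0 i j) k ω)
/-- The vector estimand `τ_R`. -/
def tauVec {d : ℕ} (R1 R0 : Fin E.N → Fin d → ℝ) : Fin d → ℝ := fun j =>
  ∑ k, E.Pi k * (E.meanK (fun i => R1 i j) k - E.meanK (fun i => R0 i j) k)
/-- The covariance matrix `V_R` of `√n (τ̂_R - τ_R)`. -/
def VRmat {d : ℕ} (R1 R0 : Fin E.N → Fin d → ℝ) : Matrix (Fin d) (Fin d) ℝ :=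
  Matrix.of fun j j' =>
    ∑ k, (E.Pi k) ^ 2 / E.pik k *
      (E.covK (fun i => R1 i j) (fun i => R1 i j') k / E.e1 k +
        E.covK (fun i => R0 i j) (fun i => R0 i j') k / E.e0 k -
        E.fk k * E.covK (fun i => R1 i j - R0 i j) (fun i => R1 i j' - R0 i j') k)

/-- The attainable sampling vectors. -/
def validZ : Finset (Fin E.N → Bool) :=
  Finset.univ.filter fun z => ∀ k, ((E.stratum k).filter fun i => z i = true).card = E.nk k
/-- Stratified random sampling without replacement: the uniform distribution over attainable
sampling vectors. -/
def Psamp : Measure (Fin E.N → Bool) := unif E.validZ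
/-- `δ̂_W` as a function of the sampling vector alone. -/
def deltaWz {J : ℕ} (W : Fin E.N → Fin J → ℝ) (z : Fin E.N → Bool) : Fin J → ℝ := fun j =>
  ∑ k, E.Pi k *
    ((∑ i ∈ E.stratum k, (if z i then (1 : ℝ) else 0) * W i j) / (E.nk k : ℝ) -
      E.meanK (fun i => W i j) k)

/-- The attainable treatment-assignment vectors given the sampling vector `z`. -/
def validT (z : Fin E.N → Bool) : Finset (Fin E.N → Bool) :=
  Finset.univ.filter fun t =>
    (∀ k, ((E.stratum k).filter fun i => z i = true ∧ t i = true).card = E.nk1 k) ∧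
    (∀ i, t i = true → z i = true)
/-- Stratified randomization of the sampled units, conditionally on the sampling vector `z`. -/
def Pgiven (z : Fin E.N → Bool) : Measure E.Omega :=
  unif ((E.validT z).image fun t => (z, t))

/-- `M_S` as a function of the sampling vector alone. -/
def MSz {J : ℕ} (W : Fin E.N → Fin J → ℝ) (z : Fin E.N → Bool) : ℝ := E.MS W (z, z)
/-- The acceptable sampling vectors. -/
def acceptZ {J : ℕ} (W : Fin E.N → Fin J → ℝ) (aS : ℝ) : Finset (Fin E.N → Bool) :=
  E.validZ.filter fun z => E.MSz W z ≤ aS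
/-- The acceptable assignment vectors given a sampling vector `z`. -/
def acceptT {J : ℕ} (X : Fin E.N → Fin J → ℝ) (aT : ℝ) (z : Fin E.N → Bool) :
    Finset (Fin E.N → Bool) := (E.validT z).filter fun t => E.MT X (z, t) ≤ aT
/-- The set `M` of jointly acceptable pairs. -/
def acceptedPairs {J1 J2 : ℕ} (W : Fin E.N → Fin J1 → ℝ) (X : Fin E.N → Fin J2 → ℝ)
    (aS aT : ℝ) : Finset E.Omega :=
  E.valid.filter fun ω => E.MS W ω ≤ aS ∧ E.MT X ω ≤ aT
/-- The single-stage rejective design: uniform over jointly acceptable pairs. -/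
def singleStage {J1 J2 : ℕ} (W : Fin E.N → Fin J1 → ℝ) (X : Fin E.N → Fin J2 → ℝ)
    (aS aT : ℝ) : Measure E.Omega := unif (E.acceptedPairs W X aS aT)
/-- The two-stage rejective design: first a uniform acceptable sampling, then a uniform
acceptable assignment given the sampling. -/
def twoStage {J1 J2 : ℕ} (W : Fin E.N → Fin J1 → ℝ) (X : Fin E.N → Fin J2 → ℝ) (aS aT : ℝ) :
    Measure E.Omega :=
  ((E.acceptZ W aS).card : ℝ≥0∞)⁻¹ • ∑ z ∈ E.acceptZ W aS,
    (((E.acceptT X aT z).card : ℝ≥0∞)⁻¹ • ∑ t ∈ E.acceptT X aT z, Measure.dirac (z, t))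
/-- The conditional acceptance probability `P(M_T ≤ a_T ∣ Z = z)`. -/
def condAcceptProb {J : ℕ} (X : Fin E.N → Fin J → ℝ) (aT : ℝ) (z : Fin E.N → Bool) : ℝ :=
  ((E.acceptT X aT z).card : ℝ) / ((E.validT z).card : ℝ)

end SRSE

/-! Relabelling units within a stratum preserves the design, so any two distinct units of a
stratum are jointly in a given arm equally often. Writing the sample variance of the `m` units in
that arm as `∑_{i,j} 1_i 1_j (a_i - a_j)² / (2m(m-1))`, its expectation is therefore proportional
to `∑_{i,j ∈ [k]} (a_i - a_j)²`, and double counting the ordered pairs of units in the arm fixes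
the constant so that the expectation is exactly `S²_{[k]}`. The bias of `V̂_ττ` then follows by
linearity from `Π_{[k]}² π_{[k]}⁻¹ f_{[k]} = Π_{[k]} f`. -/

open Finset

lemma integral_unif {α : Type*} [MeasurableSpace α] [MeasurableSingletonClass α] [Finite α]
    (s : Finset α) (f : α → ℝ) :
    ∫ x, f x ∂(unif s) = (#s : ℝ)⁻¹ * ∑ a ∈ s, f a := by
  rw [unif, integral_smul_measure,
    integral_finsetSum_measure fun _ _ => Integrable.of_finite]
  simp only [integral_dirac, smul_eq_mul, ENNReal.toReal_inv, ENNReal.toReal_natCast]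

section WeightedVariance

variable {ι : Type*} (S : Finset ι)

/-- Sample variance of `a` over the units of `S` selected by weights `w i ∈ {0, 1}`, `m` of them
selected. -/
def weightedVar (w a : ι → ℝ) (m : ℝ) : ℝ :=
  (∑ i ∈ S, w i * (a i - (∑ j ∈ S, w j * a j) / m) ^ 2) / (m - 1)

lemma sum_sum_mul_mul_sub_sq (w a : ι → ℝ) :
    ∑ i ∈ S, ∑ j ∈ S, w i * w j * (a i - a j) ^ 2
      = 2 * ((∑ i ∈ S, w i) * (∑ i ∈ S, w i * a i ^ 2) - (∑ i ∈ S, w i * a i) ^ 2) := by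
  have expand : ∀ i j, w i * w j * (a i - a j) ^ 2
      = w i * a i ^ 2 * w j - 2 * (w i * a i) * (w j * a j) + w i * (w j * a j ^ 2) :=
    fun i j => by ring
  simp only [expand, sum_add_distrib, sum_sub_distrib, ← mul_sum, ← sum_mul]
  ring

lemma weightedVar_eq_sum_pairs {w : ι → ℝ} (a : ι → ℝ) {M : ℝ} (hw : ∑ i ∈ S, w i = M)
    (hM : M ≠ 0) :
    weightedVar S w a M = (∑ i ∈ S, ∑ j ∈ S, w i * w j * (a i - a j) ^ 2) / (2 * M * (M - 1)) := by
  have expand : ∀ i, w i * (a i - (∑ j ∈ S, w j * a j) / M) ^ 2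
      = w i * a i ^ 2 - 2 * (∑ j ∈ S, w j * a j) / M * (w i * a i)
        + ((∑ j ∈ S, w j * a j) / M) ^ 2 * w i := fun i => by ring
  rw [weightedVar, sum_sum_mul_mul_sub_sq, hw]
  simp only [expand, sum_add_distrib, sum_sub_distrib, ← mul_sum, hw]
  rcases eq_or_ne (M - 1) 0 with h1 | h1
  · simp [h1]
  · field_simp
    ring

variable {Ω : Type*} (D : Finset Ω) {w : Ω → ι → ℝ} {m : ℕ} {c : ℝ}

/-- Double counting of the ordered pairs of selected units. -/
lemma card_mul_pairSum_eq [DecidableEq ι] (hidem : ∀ ω ∈ D, ∀ i ∈ S, w ω i * w ω i = w ω i)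
    (hsum : ∀ ω ∈ D, ∑ i ∈ S, w ω i = m)
    (hpair : ∀ i ∈ S, ∀ j ∈ S, i ≠ j → ∑ ω ∈ D, w ω i * w ω j = c) :
    (#S : ℝ) * (#S - 1) * c = #D * (m * (m - 1)) := by
  have total : ∑ ω ∈ D, ∑ i ∈ S, ∑ j ∈ S, w ω i * w ω j = #D * m ^ 2 := by
    rw [sum_congr rfl fun ω hω => by rw [← sum_mul_sum, hsum ω hω], sum_const, nsmul_eq_mul, sq]
  have diag : ∑ i ∈ S, ∑ ω ∈ D, w ω i * w ω i = #D * m := by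
    rw [sum_comm, sum_congr rfl fun ω hω => (sum_congr rfl (hidem ω hω)).trans (hsum ω hω),
      sum_const, nsmul_eq_mul]
  have row : ∀ i ∈ S, ∑ j ∈ S, ∑ ω ∈ D, w ω i * w ω j
      = ∑ ω ∈ D, w ω i * w ω i + (#S - 1) * c := by
    intro i hi
    rw [← add_sum_erase _ _ hi, sum_congr rfl fun j hj =>
        hpair i hi j (mem_of_mem_erase hj) (ne_of_mem_erase hj).symm,
      sum_const, card_erase_of_mem hi, nsmul_eq_mul, Nat.cast_pred (card_pos.mpr ⟨i, hi⟩)]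
  have swap : ∑ ω ∈ D, ∑ i ∈ S, ∑ j ∈ S, w ω i * w ω j
      = ∑ i ∈ S, ∑ j ∈ S, ∑ ω ∈ D, w ω i * w ω j := by
    rw [sum_comm]; exact sum_congr rfl fun _ _ => sum_comm
  rw [swap, sum_congr rfl row, sum_add_distrib, diag, sum_const, nsmul_eq_mul] at total
  linear_combination total

lemma average_weightedVar_eq (hidem : ∀ ω ∈ D, ∀ i ∈ S, w ω i * w ω i = w ω i)
    (hsum : ∀ ω ∈ D, ∑ i ∈ S, w ω i = m)
    (hpair : ∀ i ∈ S, ∀ j ∈ S, i ≠ j → ∑ ω ∈ D, w ω i * w ω j = c)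
    (hD : D.Nonempty) (hm : 2 ≤ m) (hS : 2 ≤ #S) (a : ι → ℝ) :
    (#D : ℝ)⁻¹ * ∑ ω ∈ D, weightedVar S (w ω) a m = weightedVar S 1 a #S := by
  classical
  have hmR : (2 : ℝ) ≤ m := by exact_mod_cast hm
  have hSR : (2 : ℝ) ≤ #S := by exact_mod_cast hS
  have hDR : (0 : ℝ) < #D := by exact_mod_cast card_pos.mpr hD
  have hm1 : (m : ℝ) - 1 ≠ 0 := by linarith
  have hS1 : (#S : ℝ) - 1 ≠ 0 := by linarith
  have pairs : ∑ ω ∈ D, ∑ i ∈ S, ∑ j ∈ S, w ω i * w ω j * (a i - a j) ^ 2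
      = c * ∑ i ∈ S, ∑ j ∈ S, (a i - a j) ^ 2 := by
    rw [sum_comm, mul_sum]
    refine sum_congr rfl fun i hi => ?_
    rw [sum_comm, mul_sum]
    refine sum_congr rfl fun j hj => ?_
    rcases eq_or_ne i j with rfl | hij
    · simp
    · rw [← sum_mul, hpair i hi j hj hij]
  have hcount := card_mul_pairSum_eq S D hidem hsum hpair
  rw [sum_congr rfl fun ω hω => weightedVar_eq_sum_pairs S a (hsum ω hω) (by positivity),
    ← sum_div, pairs, weightedVar_eq_sum_pairs S a (by simp) (by positivity)]
  simp only [Pi.one_apply, one_mul]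
  field_simp
  linear_combination (∑ i ∈ S, ∑ j ∈ S, (a i - a j) ^ 2) * hcount

end WeightedVariance

namespace SRSE

variable {E : SRSE}

lemma mem_stratum {k : Fin E.K} {i : Fin E.N} : i ∈ E.stratum k ↔ E.st i = k := by
  simp [stratum]

lemma integral_P (g : E.Omega → ℝ) : ∫ ω, g ω ∂E.P = (#E.valid : ℝ)⁻¹ * ∑ ω ∈ E.valid, g ω :=
  integral_unif _ _

lemma valid_nonempty (hsub : ∀ k, E.nk k ≤ E.Nk k) (hsub1 : ∀ k, E.nk1 k ≤ E.nk k) :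
    E.valid.Nonempty := by
  choose A hAsub hAcard using fun k => exists_subset_card_eq (hsub k)
  choose B hBsub hBcard using fun k => exists_subset_card_eq ((hAcard k).symm ▸ hsub1 k)
  have hA : ∀ k, (E.stratum k).filter (fun i => i ∈ A (E.st i)) = A k := fun k => by
    ext x
    simp only [mem_filter, mem_stratum]
    refine ⟨fun ⟨hx, h⟩ => hx ▸ h, fun h => ?_⟩
    have hx : E.st x = k := mem_stratum.mp (hAsub k h)
    exact ⟨hx, hx ▸ h⟩
  have hB : ∀ k, (E.stratum k).filter (fun i => i ∈ A (E.st i) ∧ i ∈ B (E.st i)) = B k :=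
    fun k => by
    ext x
    simp only [mem_filter, mem_stratum]
    refine ⟨fun ⟨hx, _, h⟩ => hx ▸ h, fun h => ?_⟩
    have hx : E.st x = k := mem_stratum.mp (hAsub k (hBsub k h))
    exact ⟨hx, hx ▸ hBsub k h, hx ▸ h⟩
  refine ⟨(fun i => decide (i ∈ A (E.st i)), fun i => decide (i ∈ B (E.st i))), ?_⟩
  simp only [valid, mem_filter, mem_univ, true_and, decide_eq_true_eq, hA, hB, hAcard, hBcard,
    implies_true, true_and]
  exact fun i hi => hBsub _ hi

section Exchangeability

variable {σ : Equiv.Perm (Fin E.N)}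

lemma card_filter_stratum_comp_perm (hσ : ∀ x, E.st (σ x) = E.st x) (k : Fin E.K)
    (p : Fin E.N → Prop) [DecidablePred p] :
    #((E.stratum k).filter fun i => p (σ i)) = #((E.stratum k).filter p) := by
  rw [← card_map σ.symm.toEmbedding (s := (E.stratum k).filter p)]
  congr 1
  ext x
  simp [mem_map_equiv, mem_stratum, hσ]

lemma comp_perm_mem_valid (hσ : ∀ x, E.st (σ x) = E.st x) {ω : E.Omega} (hω : ω ∈ E.valid) :
    (ω.1 ∘ σ, ω.2 ∘ σ) ∈ E.valid := by
  simp only [valid, mem_filter, mem_univ, true_and] at hω ⊢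
  obtain ⟨hZ, hT, hTZ⟩ := hω
  exact ⟨fun k => (card_filter_stratum_comp_perm hσ k _).trans (hZ k),
    fun k => (card_filter_stratum_comp_perm hσ k _).trans (hT k), fun i => hTZ (σ i)⟩

lemma sum_valid_comp_perm (hσ : ∀ x, E.st (σ x) = E.st x) (g : E.Omega → ℝ) :
    ∑ ω ∈ E.valid, g (ω.1 ∘ σ, ω.2 ∘ σ) = ∑ ω ∈ E.valid, g ω := by
  have hσ' : ∀ x, E.st (σ.symm x) = E.st x := fun x => by
    simpa using (hσ (σ.symm x)).symm
  exact sum_nbij' (fun ω => (ω.1 ∘ σ, ω.2 ∘ σ)) (fun ω => (ω.1 ∘ σ.symm, ω.2 ∘ σ.symm))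
    (fun ω hω => comp_perm_mem_valid hσ hω) (fun ω hω => comp_perm_mem_valid hσ' hω)
    (fun ω _ => by ext <;> simp) (fun ω _ => by ext <;> simp) (fun _ _ => rfl)

end Exchangeability

lemma st_swap_apply {u v : Fin E.N} (h : E.st u = E.st v) (x : Fin E.N) :
    E.st (Equiv.swap u v x) = E.st x := by
  rw [Equiv.swap_apply_def]
  split_ifs <;> simp_all

lemma exists_perm_stratum_of_pair {k : Fin E.K} {i j i' j' : Fin E.N}
    (hi : i ∈ E.stratum k) (hj : j ∈ E.stratum k) (hi' : i' ∈ E.stratum k)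
    (hj' : j' ∈ E.stratum k) (hij : i ≠ j) (hij' : i' ≠ j') :
    ∃ σ : Equiv.Perm (Fin E.N), (∀ x, E.st (σ x) = E.st x) ∧ σ i' = i ∧ σ j' = j := by
  rw [mem_stratum] at hi hj hi' hj'
  set σ₁ := Equiv.swap i' i
  have hσ₁ : ∀ x, E.st (σ₁ x) = E.st x := st_swap_apply (hi'.trans hi.symm)
  have hσ₁j' : E.st (σ₁ j') = E.st j := by rw [hσ₁, hj', hj]
  have hne : i ≠ σ₁ j' := by
    rw [← Equiv.swap_apply_left i' i]
    exact σ₁.injective.ne hij'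
  refine ⟨σ₁.trans (Equiv.swap (σ₁ j') j), fun x => ?_, ?_, ?_⟩
  · simp only [Equiv.trans_apply, st_swap_apply hσ₁j', hσ₁]
  · simp [σ₁, Equiv.swap_apply_of_ne_of_ne hne hij]
  · simp

lemma sum_valid_pair_eq (F : Bool × Bool → Bool × Bool → ℝ) {k : Fin E.K} {i j i' j' : Fin E.N}
    (hi : i ∈ E.stratum k) (hj : j ∈ E.stratum k) (hi' : i' ∈ E.stratum k)
    (hj' : j' ∈ E.stratum k) (hij : i ≠ j) (hij' : i' ≠ j') :
    ∑ ω ∈ E.valid, F (ω.1 i, ω.2 i) (ω.1 j, ω.2 j)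
      = ∑ ω ∈ E.valid, F (ω.1 i', ω.2 i') (ω.1 j', ω.2 j') := by
  obtain ⟨σ, hσ, rfl, rfl⟩ := exists_perm_stratum_of_pair hi hj hi' hj' hij hij'
  exact sum_valid_comp_perm hσ fun ω => F (ω.1 i', ω.2 i') (ω.1 j', ω.2 j')

lemma covK_self_eq_weightedVar (a : Fin E.N → ℝ) (k : Fin E.K) :
    E.covK a a k = weightedVar (E.stratum k) 1 a #(E.stratum k) := by
  simp only [covK, meanK, weightedVar, Pi.one_apply, one_mul, Nk, sq]

lemma covK_self_nonneg (a : Fin E.N → ℝ) (k : Fin E.K) : 0 ≤ E.covK a a k := by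
  rcases Nat.eq_zero_or_pos (E.Nk k) with h | h
  · simp [covK, card_eq_zero.mp (h : #(E.stratum k) = 0)]
  · have : (1 : ℝ) ≤ E.Nk k := by exact_mod_cast h
    exact div_nonneg (sum_nonneg fun i _ => mul_self_nonneg _) (by linarith)

lemma sCov1_self_eq_weightedVar (a : Fin E.N → ℝ) (k : Fin E.K) (ω : E.Omega) :
    E.sCov1 a a k ω = weightedVar (E.stratum k) (fun i => E.Z ω i * E.T ω i) a (E.nk1 k) := by
  simp only [sCov1, mean1, weightedVar]
  congr 1
  exact sum_congr rfl fun i _ => by ring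

lemma sCov0_self_eq_weightedVar (a : Fin E.N → ℝ) (k : Fin E.K) (ω : E.Omega) :
    E.sCov0 a a k ω =
      weightedVar (E.stratum k) (fun i => E.Z ω i * (1 - E.T ω i)) a (E.nk0 k) := by
  simp only [sCov0, mean0, weightedVar]
  congr 1
  exact sum_congr rfl fun i _ => by ring

lemma sum_Z_mul_T {ω : E.Omega} (hω : ω ∈ E.valid) (k : Fin E.K) :
    ∑ i ∈ E.stratum k, E.Z ω i * E.T ω i = E.nk1 k := by
  simp only [valid, mem_filter, mem_univ, true_and] at hω
  simp only [Z, T, ite_zero_mul_ite_zero, mul_one, sum_boole, hω.2.1 k]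

lemma sum_Z_mul_one_sub_T (hsub1 : ∀ k, E.nk1 k ≤ E.nk k) {ω : E.Omega} (hω : ω ∈ E.valid)
    (k : Fin E.K) : ∑ i ∈ E.stratum k, E.Z ω i * (1 - E.T ω i) = E.nk0 k := by
  have hZ : ∑ i ∈ E.stratum k, E.Z ω i = E.nk k := by
    simp only [valid, mem_filter, mem_univ, true_and] at hω
    simp only [Z, sum_boole, hω.1 k]
  simp only [mul_one_sub, sum_sub_distrib, hZ, sum_Z_mul_T hω, nk0, Nat.cast_sub (hsub1 k)]

lemma integral_weightedVar_status {q : Bool × Bool → ℝ} (hq : ∀ b, q b * q b = q b)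
    (hne : E.valid.Nonempty) {k : Fin E.K} {m : ℕ} (hm : 2 ≤ m) (hNk : 2 ≤ E.Nk k)
    (hcount : ∀ ω ∈ E.valid, ∑ i ∈ E.stratum k, q (ω.1 i, ω.2 i) = m) (a : Fin E.N → ℝ) :
    ∫ ω, weightedVar (E.stratum k) (fun i => q (ω.1 i, ω.2 i)) a m ∂E.P = E.covK a a k := by
  obtain ⟨i₀, hi₀, j₀, hj₀, hij₀⟩ := one_lt_card.mp (show 1 < #(E.stratum k) from hNk)
  rw [integral_P, covK_self_eq_weightedVar]
  refine average_weightedVar_eq (c := ∑ ω ∈ E.valid, q (ω.1 i₀, ω.2 i₀) * q (ω.1 j₀, ω.2 j₀))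
    _ _ (fun ω _ i _ => hq _) hcount (fun i hi j hj hij => ?_) hne hm hNk a
  exact sum_valid_pair_eq (fun b c => q b * q c) hi hj hi₀ hj₀ hij hij₀

lemma integral_sCov1_self (hne : E.valid.Nonempty) {k : Fin E.K} (hm : 2 ≤ E.nk1 k)
    (hNk : 2 ≤ E.Nk k) (a : Fin E.N → ℝ) : ∫ ω, E.sCov1 a a k ω ∂E.P = E.covK a a k := by
  simp only [sCov1_self_eq_weightedVar]
  exact integral_weightedVar_status (q := fun b => (if b.1 then 1 else 0) * (if b.2 then 1 else 0))
    (by simp) hne hm hNk (fun ω hω => sum_Z_mul_T hω k) a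

lemma integral_sCov0_self (hsub1 : ∀ k, E.nk1 k ≤ E.nk k) (hne : E.valid.Nonempty)
    {k : Fin E.K} (hm : 2 ≤ E.nk0 k) (hNk : 2 ≤ E.Nk k) (a : Fin E.N → ℝ) :
    ∫ ω, E.sCov0 a a k ω ∂E.P = E.covK a a k := by
  simp only [sCov0_self_eq_weightedVar]
  exact integral_weightedVar_status
    (q := fun b => (if b.1 then 1 else 0) * (1 - if b.2 then 1 else 0))
    (by simp) hne hm hNk (fun ω hω => sum_Z_mul_one_sub_T hsub1 hω k) a

lemma Nk_le_N (k : Fin E.K) : E.Nk k ≤ E.N := by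
  simpa [Nk] using card_le_univ (E.stratum k)

lemma nk_le_n (k : Fin E.K) : E.nk k ≤ E.n :=
  single_le_sum (fun _ _ => Nat.zero_le _) (mem_univ k)

lemma Pi_pos {k : Fin E.K} (hk : 0 < E.Nk k) : 0 < E.Pi k := by
  have := Nk_le_N k
  unfold Pi
  exact div_pos (by exact_mod_cast hk) (by exact_mod_cast hk.trans_le this)

lemma f_pos {k : Fin E.K} (hnk : 0 < E.nk k) (hNk : 0 < E.Nk k) : 0 < E.f := by
  have := nk_le_n k
  have := Nk_le_N k
  unfold f
  exact div_pos (by exact_mod_cast hnk.trans_le ‹_›) (by exact_mod_cast hNk.trans_le ‹_›)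

lemma Pi_sq_div_pik_mul_fk {k : Fin E.K} (hnk : 0 < E.nk k) (hNk : 0 < E.Nk k) :
    E.Pi k ^ 2 / E.pik k * E.fk k = E.f * E.Pi k := by
  have hn : (0 : ℝ) < E.n := by exact_mod_cast hnk.trans_le (nk_le_n k)
  have hN : (0 : ℝ) < E.N := by exact_mod_cast hNk.trans_le (Nk_le_N k)
  have : (0 : ℝ) < E.nk k := by exact_mod_cast hnk
  have : (0 : ℝ) < E.Nk k := by exact_mod_cast hNk
  unfold Pi pik fk f
  field_simp

lemma integral_hatVtt (Y1 Y0 : Fin E.N → ℝ) :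
    ∫ ω, E.hatVtt Y1 Y0 ω ∂E.P = ∑ k, E.Pi k ^ 2 / E.pik k *
      ((∫ ω, E.sCov1 Y1 Y1 k ω ∂E.P) / E.e1 k + (∫ ω, E.sCov0 Y0 Y0 k ω ∂E.P) / E.e0 k) := by
  simp only [integral_P, hatVtt, mul_sum]
  rw [sum_comm]
  refine sum_congr rfl fun k _ => ?_
  simp only [← mul_sum, sum_add_distrib, ← sum_div]
  ring

lemma integral_hatVtt_sub_Vtt {Y1 Y0 : Fin E.N → ℝ}
    (h1 : ∀ k, ∫ ω, E.sCov1 Y1 Y1 k ω ∂E.P = E.covK Y1 Y1 k)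
    (h0 : ∀ k, ∫ ω, E.sCov0 Y0 Y0 k ω ∂E.P = E.covK Y0 Y0 k)
    (hnk : ∀ k, 0 < E.nk k) (hNk : ∀ k, 0 < E.Nk k) :
    (∫ ω, E.hatVtt Y1 Y0 ω ∂E.P) - E.Vtt Y1 Y0
      = E.f * ∑ k, E.Pi k * E.covK (fun i => Y1 i - Y0 i) (fun i => Y1 i - Y0 i) k := by
  rw [integral_hatVtt, Vtt, ← sum_sub_distrib, mul_sum]
  refine sum_congr rfl fun k _ => ?_
  rw [h1, h0]
  linear_combination E.covK (fun i => Y1 i - Y0 i) (fun i => Y1 i - Y0 i) k *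
    Pi_sq_div_pik_mul_fk (hnk k) (hNk k)

end SRSE

/-- under the stratified randomized survey experiment the within-stratum
arm-specific sample variances are unbiased for the stratum population variances, and the
variance estimator `V̂_ττ` is conservative in expectation:
`E[V̂_ττ] - V_ττ = f ∑ₖ Π_[k] S²_[k]τ ≥ 0`, with equality iff `S²_[k]τ = 0` for all `k`. -/
theorem statement10 (E : SurveyExperiments.SRSE) (Y1 Y0 : Fin E.N → ℝ)
    (hlo : ∀ k, 2 ≤ E.nk1 k) (hhi : ∀ k, E.nk1 k + 2 ≤ E.nk k)
    (hsub : ∀ k, E.nk k ≤ E.Nk k) :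
    (∀ k, ∫ ω, E.sCov1 Y1 Y1 k ω ∂E.P = E.covK Y1 Y1 k) ∧
    (∀ k, ∫ ω, E.sCov0 Y0 Y0 k ω ∂E.P = E.covK Y0 Y0 k) ∧
    ((∫ ω, E.hatVtt Y1 Y0 ω ∂E.P) - E.Vtt Y1 Y0
        = E.f * ∑ k, E.Pi k * E.covK (fun i => Y1 i - Y0 i) (fun i => Y1 i - Y0 i) k) ∧
    (0 ≤ (∫ ω, E.hatVtt Y1 Y0 ω ∂E.P) - E.Vtt Y1 Y0) ∧
    ((∫ ω, E.hatVtt Y1 Y0 ω ∂E.P) = E.Vtt Y1 Y0 ↔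
      ∀ k, E.covK (fun i => Y1 i - Y0 i) (fun i => Y1 i - Y0 i) k = 0) := by
  have hsub1 (k) : E.nk1 k ≤ E.nk k := by have := hhi k; omega
  have hnk0 (k) : 2 ≤ E.nk0 k := by have := hhi k; unfold SRSE.nk0; omega
  have hnk (k) : 0 < E.nk k := by have := hhi k; omega
  have hNk (k) : 2 ≤ E.Nk k := by have := hhi k; have := hsub k; omega
  have hne := SRSE.valid_nonempty hsub hsub1
  have h1 (k) := SRSE.integral_sCov1_self hne (hlo k) (hNk k) Y1
  have h0 (k) := SRSE.integral_sCov0_self hsub1 hne (hnk0 k) (hNk k) Y0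
  have bias := SRSE.integral_hatVtt_sub_Vtt h1 h0 hnk fun k => by have := hNk k; omega
  have hPi (k) : 0 < E.Pi k := SRSE.Pi_pos (by have := hNk k; omega)
  have hterm (k) : 0 ≤ E.Pi k * E.covK (fun i => Y1 i - Y0 i) (fun i => Y1 i - Y0 i) k :=
    mul_nonneg (hPi k).le (SRSE.covK_self_nonneg _ k)
  have hf : 0 ≤ E.f := by unfold SRSE.f; positivity
  refine ⟨h1, h0, bias, bias ▸ mul_nonneg hf (sum_nonneg fun k _ => hterm k), ?_⟩
  rw [← sub_eq_zero, bias, mul_eq_zero, sum_eq_zero_iff_of_nonneg fun k _ => hterm k]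
  constructor
  · rintro (hf0 | hzero) k
    · exact absurd hf0 (SRSE.f_pos (hnk k) (by have := hNk k; omega)).ne'
    · exact (mul_eq_zero.mp (hzero k (mem_univ k))).resolve_left (hPi k).ne'
  · exact fun hzero => Or.inr fun k _ => by rw [hzero k, mul_zero]

end SurveyExperiments
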